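/- arXiv:2407.04579 — 2 statements merged into one kernel-verified Lean document; each statement's English description precedes it below -/
import Mathlib

section
/- (Stein's lemma, the one-dimensional tool underlying Stein's unbiased risk estimate.) Let μ ∈ ℝ, σ > 0, and let g : ℝ → ℝ be differentiable. Suppose that the functions x ↦ (x − μ)·g(x) and x ↦ g'(x) are both integrable with respect to the Gaussian measure N(μ, σ²), and that g(x)·φ(x; μ, σ²) → 0 as x → +∞ and as x → −∞. Then ∫ (x − μ)·g(x) dN(μ, σ²)(x) = σ² · ∫ g'(x) dN(μ, σ²)(x). -/
/-! Differentiating the Gaussian density gives `φ' = -((x - μ) / v) φ`, so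
`(g φ)' = g' φ - v⁻¹ (x - μ) g φ`. Both terms are integrable by hypothesis, and the integral of
`(g φ)'` over `ℝ` vanishes because `g φ` tends to `0` at `±∞`; passing back to integrals
against `N(μ, v)` gives `∫ (x - μ) g dN(μ, v) = v ∫ g' dN(μ, v)`. -/

open MeasureTheory ProbabilityTheory Filter Real
open scoped NNReal

namespace ProbabilityTheory

lemma hasDerivAt_gaussianPDFReal (μ : ℝ) (v : ℝ≥0) (x : ℝ) :
    HasDerivAt (gaussianPDFReal μ v) (-((x - μ) / v) * gaussianPDFReal μ v x) x := by
  have hexponent : HasDerivAt (fun y : ℝ => -(y - μ) ^ 2 / (2 * v)) (-((x - μ) / v)) x := by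
    refine ((((hasDerivAt_id x).sub_const μ).pow 2).neg.div_const (2 * (v : ℝ))).congr_deriv ?_
    simp only [id, Nat.cast_ofNat, mul_one, neg_div]
    rw [mul_div_mul_left _ _ two_ne_zero, Nat.add_one_sub_one, pow_one]
  rw [gaussianPDFReal_def]
  refine (hexponent.exp.const_mul (√(2 * π * v))⁻¹).congr_deriv ?_
  ring

lemma integrable_gaussianReal_iff {E : Type*} [NormedAddCommGroup E] [NormedSpace ℝ E]
    {μ : ℝ} {v : ℝ≥0} {f : ℝ → E} (hv : v ≠ 0) :
    Integrable f (gaussianReal μ v) ↔ Integrable (fun x => gaussianPDFReal μ v x • f x) := by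
  rw [gaussianReal_of_var_ne_zero _ hv, integrable_withDensity_iff_integrable_smul'
    (measurable_gaussianPDF μ v) (ae_of_all _ fun _ => gaussianPDF_lt_top)]
  simp only [toReal_gaussianPDF]

theorem integral_sub_mean_mul_gaussianReal {μ : ℝ} {v : ℝ≥0} (hv : v ≠ 0) {g : ℝ → ℝ}
    (hg : Differentiable ℝ g)
    (hint₁ : Integrable (fun x => (x - μ) * g x) (gaussianReal μ v))
    (hint₂ : Integrable (deriv g) (gaussianReal μ v))
    (htop : Tendsto (fun x => g x * gaussianPDFReal μ v x) atTop (nhds 0))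
    (hbot : Tendsto (fun x => g x * gaussianPDFReal μ v x) atBot (nhds 0)) :
    ∫ x, (x - μ) * g x ∂(gaussianReal μ v) = v * ∫ x, deriv g x ∂(gaussianReal μ v) := by
  set φ := gaussianPDFReal μ v
  rw [integrable_gaussianReal_iff hv] at hint₁ hint₂
  simp only [smul_eq_mul] at hint₁ hint₂
  have hderiv : ∀ x, HasDerivAt (fun y => g y * φ y)
      (φ x * deriv g x - (v : ℝ)⁻¹ * (φ x * ((x - μ) * g x))) x := fun x => by
    refine ((hg x).hasDerivAt.mul (hasDerivAt_gaussianPDFReal μ v x)).congr_deriv ?_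
    ring
  have hzero := integral_of_hasDerivAt_of_tendsto hderiv
    (hint₂.sub (hint₁.const_mul _)) hbot htop
  rw [integral_sub hint₂ (hint₁.const_mul _), integral_const_mul, sub_self] at hzero
  rw [sub_eq_zero] at hzero
  simp only [integral_gaussianReal_eq_integral_smul hv, smul_eq_mul]
  rw [hzero, mul_inv_cancel_left₀ (NNReal.coe_ne_zero.mpr hv)]

end ProbabilityTheory

/-- **Stein's lemma** (one-dimensional). If `g` is differentiable, the functions
`x ↦ (x − μ)·g x` and `g'` are integrable with respect to the Gaussian measure
`N(μ, σ²)`, and `g x · φ(x; μ, σ²) → 0` as `x → ±∞`, then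
`∫ (x − μ)·g x dN(μ,σ²) = σ² · ∫ g' dN(μ,σ²)`. -/
theorem stein_lemma
    (μ : ℝ) (σ : ℝ) (hσ : 0 < σ) (g : ℝ → ℝ) (hg : Differentiable ℝ g)
    (hint₁ : Integrable (fun x => (x - μ) * g x)
      (gaussianReal μ ⟨σ ^ 2, sq_nonneg σ⟩))
    (hint₂ : Integrable (deriv g) (gaussianReal μ ⟨σ ^ 2, sq_nonneg σ⟩))
    (htop : Tendsto (fun x => g x * gaussianPDFReal μ ⟨σ ^ 2, sq_nonneg σ⟩ x)
      atTop (nhds 0))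
    (hbot : Tendsto (fun x => g x * gaussianPDFReal μ ⟨σ ^ 2, sq_nonneg σ⟩ x)
      atBot (nhds 0)) :
    (∫ x, (x - μ) * g x ∂(gaussianReal μ ⟨σ ^ 2, sq_nonneg σ⟩)) =
      σ ^ 2 * ∫ x, deriv g x ∂(gaussianReal μ ⟨σ ^ 2, sq_nonneg σ⟩) := by
  have hv : (⟨σ ^ 2, sq_nonneg σ⟩ : ℝ≥0) ≠ 0 := fun h =>
    (pow_pos hσ 2).ne' (congrArg NNReal.toReal h)
  exact integral_sub_mean_mul_gaussianReal hv hg hint₁ hint₂ htop hbot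
end

section
/- Let N ≥ 3 be an integer, σ₀ > 0, A > 0, and M ∈ ℝ^N. Suppose z is distributed according to the product measure Π_{i=1}^N N(M_i, A + σ₀²) (the marginal distribution of the observations in the normal-normal model). With S(z) = Σ_{i=1}^N (z_i − M_i)², the empirical shrinking-factor correction is unbiased for the Bayes shrinkage: E[(N−2)·σ₀²/S(z)] = σ₀²/(A + σ₀²), and consequently E[1 − (N−2)·σ₀²/S(z)] = A/(A + σ₀²) = B, the Bayes shrinkage factor. -/
/-!
Write `1 / S = ∫₀^∞ e^{-tS} dt` and exchange the integrals (Tonelli). For `x ~ N(m, v)` one has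
`E[e^{-t(x-m)²}] = (1 + 2tv)^{-1/2}`, so by independence of the coordinates
`E[1 / S] = ∫₀^∞ (1 + 2vt)^{-N/2} dt = 1 / (v (N - 2))`, which is finite exactly when `N ≥ 3`.
-/

open MeasureTheory ProbabilityTheory Finset

open Real Set Filter
open scoped NNReal ENNReal Topology

lemma integral_exp_neg_mul_Ioi {s : ℝ} (hs : 0 < s) : ∫ t in Ioi 0, exp (-s * t) = s⁻¹ := by
  simpa [neg_div, div_neg] using integral_exp_mul_Ioi (neg_neg_of_pos hs) 0

lemma ofReal_inv_eq_lintegral_exp_neg_mul_Ioi {s : ℝ} (hs : 0 < s) :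
    ENNReal.ofReal s⁻¹ = ∫⁻ t in Ioi 0, ENNReal.ofReal (exp (-s * t)) := by
  rw [← integral_exp_neg_mul_Ioi hs, ofReal_integral_eq_lintegral_ofReal
    (exp_neg_integrableOn_Ioi 0 hs) (ae_of_all _ fun _ ↦ (exp_pos _).le)]

lemma hasDerivAt_one_add_mul_rpow_div {c p x : ℝ} (hc : c ≠ 0) (hp : p + 1 ≠ 0)
    (hx : 0 < 1 + c * x) :
    HasDerivAt (fun t ↦ (1 + c * t) ^ (p + 1) / (c * (p + 1))) ((1 + c * x) ^ p) x := by
  have h := (((hasDerivAt_id' x).const_mul c).const_add 1).rpow_const (p := p + 1) (Or.inl hx.ne')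
  refine (h.div_const (c * (p + 1))).congr_deriv ?_
  rw [add_sub_cancel_right]
  field_simp

lemma lintegral_one_add_mul_rpow_Ioi {c p : ℝ} (hc : 0 < c) (hp : p < -1) :
    ∫⁻ t in Ioi 0, ENNReal.ofReal ((1 + c * t) ^ p) = ENNReal.ofReal (c * -(p + 1))⁻¹ := by
  have hderiv : ∀ x ∈ Ici (0 : ℝ),
      HasDerivAt (fun t ↦ (1 + c * t) ^ (p + 1) / (c * (p + 1))) ((1 + c * x) ^ p) x :=
    fun x hx ↦ hasDerivAt_one_add_mul_rpow_div hc.ne' (by linarith) (by nlinarith [mem_Ici.mp hx])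
  have hpos : ∀ x ∈ Ioi (0 : ℝ), 0 ≤ (1 + c * x) ^ p :=
    fun x hx ↦ rpow_nonneg (by nlinarith [mem_Ioi.mp hx]) p
  have hlim : Tendsto (fun t ↦ (1 + c * t) ^ (p + 1) / (c * (p + 1))) atTop (𝓝 0) := by
    have hbase : Tendsto (fun t : ℝ ↦ 1 + c * t) atTop atTop :=
      tendsto_atTop_add_const_left _ 1 (tendsto_id.const_mul_atTop hc)
    simpa using ((tendsto_rpow_neg_atTop (by linarith : 0 < -(p + 1))).comp hbase).div_const _
  rw [← ofReal_integral_eq_lintegral_ofReal (integrableOn_Ioi_deriv_of_nonneg' hderiv hpos hlim)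
    (ae_restrict_of_forall_mem measurableSet_Ioi hpos),
    integral_Ioi_of_hasDerivAt_of_nonneg' hderiv hpos hlim]
  congr 1
  field_simp
  simp

lemma integral_exp_neg_mul_sq_sub_gaussianReal {m t : ℝ} {v : ℝ≥0} (hv : v ≠ 0)
    (ht : 0 < 1 + 2 * t * v) :
    ∫ x, exp (-(t * (x - m) ^ 2)) ∂gaussianReal m v = (1 + 2 * t * v) ^ (-(1 / 2) : ℝ) := by
  have hv' : (0 : ℝ) < v := by positivity
  set b := t + (2 * v : ℝ)⁻¹ with hb
  have hdensity (x : ℝ) : gaussianPDFReal m v x • exp (-(t * (x - m) ^ 2))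
      = (√(2 * π * v))⁻¹ * exp (-b * (x - m) ^ 2) := by
    rw [gaussianPDFReal, smul_eq_mul, mul_assoc, ← exp_add]
    congr 2
    rw [hb]
    field_simp
    ring
  rw [integral_gaussianReal_eq_integral_smul hv]
  simp_rw [hdensity]
  rw [integral_const_mul, integral_sub_right_eq_self (fun y ↦ exp (-b * y ^ 2)) m,
    integral_gaussian, rpow_neg ht.le, ← sqrt_eq_rpow, ← sqrt_inv, ← sqrt_inv,
    ← sqrt_mul (by positivity)]
  congr 1
  rw [hb]
  field_simp
  ring

section GaussianPi

variable {ι : Type*} [Fintype ι] (m : ι → ℝ) {v : ℝ≥0}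

lemma lintegral_exp_neg_mul_sum_sq_sub_gaussianReal_pi (hv : v ≠ 0) {t : ℝ} (ht : 0 ≤ t) :
    ∫⁻ z, ENNReal.ofReal (exp (-(∑ i, (z i - m i) ^ 2) * t))
        ∂Measure.pi (fun i ↦ gaussianReal (m i) v)
      = ENNReal.ofReal ((1 + 2 * v * t) ^ (-(Fintype.card ι / 2 : ℝ))) := by
  have hfactor (z : ι → ℝ) : exp (-(∑ i, (z i - m i) ^ 2) * t)
      = ∏ i, exp (-(t * (z i - m i) ^ 2)) := by
    rw [← exp_sum, neg_mul, sum_mul, ← sum_neg_distrib]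
    exact congrArg exp (sum_congr rfl fun i _ ↦ by ring)
  have hint (i : ι) : Integrable (fun x ↦ exp (-(t * (x - m i) ^ 2))) (gaussianReal (m i) v) := by
    refine (integrable_const (1 : ℝ)).mono' (by fun_prop) (ae_of_all _ fun x ↦ ?_)
    rw [norm_of_nonneg (exp_pos _).le, exp_le_one_iff, neg_nonpos]
    positivity
  simp_rw [hfactor]
  rw [← ofReal_integral_eq_lintegral_ofReal (Integrable.fintype_prod hint)
    (ae_of_all _ fun z ↦ prod_nonneg fun i _ ↦ (exp_pos _).le),
    integral_fintype_prod_eq_prod fun i x ↦ exp (-(t * (x - m i) ^ 2))]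
  have hbase : 0 < 1 + 2 * t * v := by positivity
  simp_rw [integral_exp_neg_mul_sq_sub_gaussianReal hv hbase, prod_const, card_univ,
    ← rpow_natCast, ← rpow_mul hbase.le]
  congr 2 <;> ring

lemma ae_sum_sq_sub_pos_gaussianReal_pi [Nonempty ι] (hv : v ≠ 0) :
    ∀ᵐ z ∂Measure.pi (fun i ↦ gaussianReal (m i) v), 0 < ∑ i, (z i - m i) ^ 2 := by
  have := fun i ↦ nullSingletonClass_gaussianReal (μ := m i) hv
  filter_upwards [compl_mem_ae_iff.mpr (measure_singleton m)] with z hz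
  obtain ⟨i, hi⟩ := Function.ne_iff.mp hz
  exact sum_pos' (fun j _ ↦ sq_nonneg _) ⟨i, mem_univ i, sq_pos_of_ne_zero (sub_ne_zero.mpr hi)⟩

lemma lintegral_inv_sum_sq_sub_gaussianReal_pi (hv : v ≠ 0) (hι : 2 < Fintype.card ι) :
    ∫⁻ z, ENNReal.ofReal (∑ i, (z i - m i) ^ 2)⁻¹ ∂Measure.pi (fun i ↦ gaussianReal (m i) v)
      = ENNReal.ofReal (((v : ℝ) * (Fintype.card ι - 2))⁻¹) := by
  have : Nonempty ι := Fintype.card_pos_iff.mp (by omega)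
  calc ∫⁻ z, ENNReal.ofReal (∑ i, (z i - m i) ^ 2)⁻¹ ∂Measure.pi (fun i ↦ gaussianReal (m i) v)
      = ∫⁻ z, (∫⁻ t in Ioi 0, ENNReal.ofReal (exp (-(∑ i, (z i - m i) ^ 2) * t)))
          ∂Measure.pi (fun i ↦ gaussianReal (m i) v) := by
        refine lintegral_congr_ae ?_
        filter_upwards [ae_sum_sq_sub_pos_gaussianReal_pi m hv] with z hz
        exact ofReal_inv_eq_lintegral_exp_neg_mul_Ioi hz
    _ = ∫⁻ t in Ioi 0, ∫⁻ z, ENNReal.ofReal (exp (-(∑ i, (z i - m i) ^ 2) * t))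
          ∂Measure.pi (fun i ↦ gaussianReal (m i) v) :=
        lintegral_lintegral_swap (Measurable.aemeasurable (by fun_prop))
    _ = ∫⁻ t in Ioi 0, ENNReal.ofReal ((1 + 2 * v * t) ^ (-(Fintype.card ι / 2 : ℝ))) :=
        setLIntegral_congr_fun measurableSet_Ioi fun t ht ↦
          lintegral_exp_neg_mul_sum_sq_sub_gaussianReal_pi m hv (le_of_lt ht)
    _ = ENNReal.ofReal (((v : ℝ) * (Fintype.card ι - 2))⁻¹) := by
        have hι' : (2 : ℝ) < Fintype.card ι := by exact_mod_cast hι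
        rw [lintegral_one_add_mul_rpow_Ioi (by positivity) (by linarith)]
        congr 2
        ring

lemma integrable_inv_sum_sq_sub_gaussianReal_pi (hv : v ≠ 0) (hι : 2 < Fintype.card ι) :
    Integrable (fun z ↦ (∑ i, (z i - m i) ^ 2)⁻¹) (Measure.pi (fun i ↦ gaussianReal (m i) v)) := by
  refine ⟨Measurable.aestronglyMeasurable (by fun_prop), ?_⟩
  rw [hasFiniteIntegral_iff_ofReal (ae_of_all _ fun z ↦ by positivity),
    lintegral_inv_sum_sq_sub_gaussianReal_pi m hv hι]
  exact ENNReal.ofReal_lt_top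

lemma integral_inv_sum_sq_sub_gaussianReal_pi (hv : v ≠ 0) (hι : 2 < Fintype.card ι) :
    ∫ z, (∑ i, (z i - m i) ^ 2)⁻¹ ∂Measure.pi (fun i ↦ gaussianReal (m i) v)
      = ((v : ℝ) * (Fintype.card ι - 2))⁻¹ := by
  have hι' : (2 : ℝ) < Fintype.card ι := by exact_mod_cast hι
  rw [integral_eq_lintegral_of_nonneg_ae (ae_of_all _ fun z ↦ by positivity)
    (Measurable.aestronglyMeasurable (by fun_prop)),
    lintegral_inv_sum_sq_sub_gaussianReal_pi m hv hι, ENNReal.toReal_ofReal]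
  have : (0 : ℝ) < v := by positivity
  have : (0 : ℝ) < Fintype.card ι - 2 := by linarith
  positivity

end GaussianPi

/-- **Unbiasedness of the empirical shrinking-factor correction.** For `N ≥ 3`, when
`z ~ Π N(M i, A + σ₀²)` (the marginal distribution of the observations in the
normal-normal model) and `S(z) = Σ (z i − M i)²`, we have
`E[(N−2)·σ₀²/S(z)] = σ₀²/(A + σ₀²)`, hence
`E[1 − (N−2)·σ₀²/S(z)] = A/(A + σ₀²)`, the Bayes shrinkage factor. -/
theorem shrinking_factor_unbiased
    (N : ℕ) (hN : 3 ≤ N) (σ₀ A : ℝ) (hA : 0 < A) (M : Fin N → ℝ)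
    (P : Measure (Fin N → ℝ))
    (hP : P = Measure.pi fun i =>
      gaussianReal (M i) ⟨A + σ₀ ^ 2, by positivity⟩)
    (S : (Fin N → ℝ) → ℝ) (hS : ∀ z, S z = ∑ i, (z i - M i) ^ 2) :
    (∫ z, (N - 2) * σ₀ ^ 2 / S z ∂P) = σ₀ ^ 2 / (A + σ₀ ^ 2) ∧
      (∫ z, 1 - (N - 2) * σ₀ ^ 2 / S z ∂P) = A / (A + σ₀ ^ 2) := by
  obtain rfl : S = fun z ↦ ∑ i, (z i - M i) ^ 2 := funext hS
  set v : ℝ≥0 := ⟨A + σ₀ ^ 2, by positivity⟩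
  subst hP
  have hv : (v : ℝ) = A + σ₀ ^ 2 := rfl
  have hv₀ : v ≠ 0 := by rw [← NNReal.coe_ne_zero, hv]; positivity
  have hcard : 2 < Fintype.card (Fin N) := by rw [Fintype.card_fin]; omega
  have hN₂ : (N : ℝ) - 2 ≠ 0 := by
    have : (3 : ℝ) ≤ N := by exact_mod_cast hN
    linarith
  have hmean : ∫ z, (N - 2) * σ₀ ^ 2 / ∑ i, (z i - M i) ^ 2
      ∂Measure.pi (fun i ↦ gaussianReal (M i) v) = σ₀ ^ 2 / (A + σ₀ ^ 2) := by
    simp_rw [div_eq_mul_inv ((N - 2) * σ₀ ^ 2)]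
    rw [integral_const_mul, integral_inv_sum_sq_sub_gaussianReal_pi M hv₀ hcard, Fintype.card_fin,
      hv]
    field_simp
  refine ⟨hmean, ?_⟩
  rw [integral_sub (integrable_const 1) ?_, hmean]
  · simp only [integral_const, probReal_univ, smul_eq_mul, mul_one]
    field_simp
    ring
  simp_rw [div_eq_mul_inv ((N - 2) * σ₀ ^ 2)]
  exact (integrable_inv_sum_sq_sub_gaussianReal_pi M hv₀ hcard).const_mul _
end
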